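/- The Ulam sphere of radius 1 in S_n has cardinality |S(σ,1)| = 1 + (n−1)², independently of the center σ. -/
import Mathlib


namespace UlamPaper

/-- Underlying function of the translocation `φ(i,j)` (0-indexed). -/
def tf (i j k : ℕ) : ℕ :=
  if i ≤ j then (if k < i ∨ j < k then k else if k = j then i else k + 1)
  else (if k < j ∨ i < k then k else if k = j then i else k - 1)

theorem tf_lt {n i j k : ℕ} (hi : i < n) (hj : j < n) (hk : k < n) : tf i j k < n := by
  unfold tf; split_ifs <;> omega

theorem tf_tf (i j k : ℕ) : tf j i (tf i j k) = k := by
  unfold tf; split_ifs <;> omega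

/-- The translocation `φ(i,j)` as a permutation of `Fin n`: it deletes the entry in
position `i` and reinserts it at position `j`, shifting intermediate entries. -/
def transloc {n : ℕ} (i j : Fin n) : Equiv.Perm (Fin n) where
  toFun k := ⟨tf i.val j.val k.val, tf_lt i.isLt j.isLt k.isLt⟩
  invFun k := ⟨tf j.val i.val k.val, tf_lt j.isLt i.isLt k.isLt⟩
  left_inv k := Fin.ext (tf_tf i.val j.val k.val)
  right_inv k := Fin.ext (tf_tf j.val i.val k.val)

/-- `IsTransloc φ` : `φ` is a translocation. -/
def IsTransloc {n : ℕ} (φ : Equiv.Perm (Fin n)) : Prop := ∃ i j : Fin n, φ = transloc i j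

/-- Length of the longest common subsequence of two `n`-length sequences. -/
noncomputable def lcsLen {n : ℕ} {α : Type*} (u v : Fin n → α) : ℕ :=
  sSup {k | ∃ f g : Fin k → Fin n, StrictMono f ∧ StrictMono g ∧ ∀ p, u (f p) = v (g p)}

/-- The Ulam distance `d(σ,π) = n - ℓ(σ,π)`. -/
noncomputable def ulamDist {n : ℕ} (σ π : Equiv.Perm (Fin n)) : ℕ :=
  n - lcsLen (⇑σ) (⇑π)

/-- The `r`-regular multipermutation `m_σ^r` (with values in `[1, n/r]`). -/
def mult {n : ℕ} (r : ℕ) (σ : Equiv.Perm (Fin n)) : Fin n → ℕ :=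
  fun i => (σ i).val / r + 1

/-- The `r`-regular Ulam distance, expressed as `n - ℓ(m_σ^r, m_π^r)`. -/
noncomputable def multDist {n : ℕ} (r : ℕ) (σ π : Equiv.Perm (Fin n)) : ℕ :=
  n - lcsLen (mult r σ) (mult r π)
theorem transloc_apply {n : ℕ} (i j k : Fin n) :
    (transloc i j k).val = tf i.val j.val k.val := rfl

theorem transloc_self {n : ℕ} (i : Fin n) : transloc i i = 1 :=
  Equiv.ext fun k => Fin.ext (show tf i.val i.val k.val = k.val by unfold tf; split_ifs <;> omega)

theorem transloc_adj {n : ℕ} {i j : Fin n} (h : i.val = j.val + 1) : transloc i j = transloc j i :=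
  Equiv.ext fun k => Fin.ext
    (show tf i.val j.val k.val = tf j.val i.val k.val by unfold tf; split_ifs <;> omega)

theorem transloc_eq_elim {n : ℕ} {i j i' j' : Fin n} (h : transloc i j = transloc i' j')
    (k : Fin n) : tf i.val j.val k.val = tf i'.val j'.val k.val :=
  congrArg Fin.val (DFunLike.congr_fun h k)

theorem succAbove_val {m : ℕ} (i : Fin (m + 1)) (p : Fin m) :
    (i.succAbove p).val = if p.val < i.val then p.val else p.val + 1 := by
  rw [Fin.succAbove]
  by_cases h : (p.castSucc : Fin (m+1)) < i
  · rw [if_pos h, if_pos]; · rfl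
    · simpa [Fin.lt_def] using h
  · rw [if_neg h, if_neg]; · rfl
    · simpa [Fin.lt_def] using h

theorem tf_sk (i j p : ℕ) :
    tf i j (if p < j then p else p + 1) = (if p < i then p else p + 1) := by
  unfold tf; split_ifs <;> omega

theorem transloc_succAbove {m : ℕ} (i j : Fin (m + 1)) (p : Fin m) :
    transloc i j (j.succAbove p) = i.succAbove p := by
  apply Fin.ext
  rw [transloc_apply, succAbove_val, succAbove_val, tf_sk]

theorem transloc_apply_self {m : ℕ} (i j : Fin (m + 1)) : transloc i j j = i := by
  apply Fin.ext
  rw [transloc_apply]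
  unfold tf; split_ifs <;> omega

theorem exists_succAbove_eq_comp {m : ℕ} {f : Fin m → Fin (m + 1)} (hf : StrictMono f) :
    ∃ i : Fin (m + 1), f = i.succAbove := by
  have hinj := hf.injective
  have hns : ¬ Function.Surjective f := by
    intro h
    have := Fintype.card_le_of_surjective f h
    simp at this
  obtain ⟨i, hi⟩ : ∃ i, ∀ a, f a ≠ i := by
    simpa [Function.Surjective] using hns
  refine ⟨i, ?_⟩
  have hsub : Set.range f ⊆ Set.range i.succAbove := by
    rw [Fin.range_succAbove]
    rintro x ⟨a, rfl⟩
    exact hi a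
  have hcard : (Set.range i.succAbove).ncard ≤ (Set.range f).ncard := by
    have h1 : (Set.range f).ncard = m := by
      rw [← Nat.card_coe_set_eq, Nat.card_range_of_injective hinj,
        Nat.card_eq_fintype_card, Fintype.card_fin]
    have h2 : (Set.range i.succAbove).ncard = m := by
      rw [← Nat.card_coe_set_eq,
        Nat.card_range_of_injective (Fin.strictMono_succAbove i).injective,
        Nat.card_eq_fintype_card, Fintype.card_fin]
    omega
  have hre := Set.eq_of_subset_of_ncard_le hsub hcard (Set.toFinite _)
  haveI hwf : WellFoundedLT (Fin m) := inferInstance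
  exact (StrictMono.range_inj (β := Fin m) hf (Fin.strictMono_succAbove i)).1 hre


theorem lcs_bddAbove {n : ℕ} {α : Type*} (u v : Fin n → α) :
    BddAbove {k | ∃ f g : Fin k → Fin n, StrictMono f ∧ StrictMono g ∧ ∀ p, u (f p) = v (g p)} := by
  refine ⟨n, fun k hk => ?_⟩
  obtain ⟨f, _, hf, _, _⟩ := hk
  simpa using Fintype.card_le_of_injective f hf.injective

theorem lcs_zero_mem {n : ℕ} {α : Type*} (u v : Fin n → α) :
    0 ∈ {k | ∃ f g : Fin k → Fin n, StrictMono f ∧ StrictMono g ∧ ∀ p, u (f p) = v (g p)} :=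
  ⟨Fin.elim0, Fin.elim0, by intro a; exact a.elim0, by intro a; exact a.elim0,
    fun p => p.elim0⟩

theorem mem_sphere_iff {m : ℕ} (σ π : Equiv.Perm (Fin (m + 1))) :
    ulamDist σ π ≤ 1 ↔ ∃ i j : Fin (m + 1), π = σ * transloc i j := by
  constructor
  · intro h
    have hL : m ≤ lcsLen (⇑σ) (⇑π) := by unfold ulamDist at h; omega
    have hmem : lcsLen (⇑σ) (⇑π) ∈
        {k | ∃ f g : Fin k → Fin (m+1), StrictMono f ∧ StrictMono g ∧ ∀ p, σ (f p) = π (g p)} := by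
      rw [lcsLen]
      exact Nat.sSup_mem ⟨0, lcs_zero_mem _ _⟩ (lcs_bddAbove _ _)
    obtain ⟨f, g, hf, hg, hfg⟩ := hmem
    have hcast : StrictMono (Fin.castLE hL) := fun a b hab => hab
    obtain ⟨i, hi⟩ := exists_succAbove_eq_comp (hf.comp hcast)
    obtain ⟨j, hj⟩ := exists_succAbove_eq_comp (hg.comp hcast)
    have key : ∀ p : Fin m, (σ⁻¹ * π) (j.succAbove p) = i.succAbove p := by
      intro p
      have h1 : σ (i.succAbove p) = π (j.succAbove p) := by
        rw [← congrFun hi p, ← congrFun hj p]; exact hfg _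
      simp [Equiv.Perm.mul_apply, ← h1]
    have hji : (σ⁻¹ * π) j = i := by
      by_contra hne
      have : (σ⁻¹ * π) j ∈ Set.range i.succAbove := by
        rw [Fin.range_succAbove]; exact hne
      obtain ⟨p, hp⟩ := this
      rw [← key p] at hp
      exact Fin.succAbove_ne j p ((σ⁻¹ * π).injective hp)
    have hphi : σ⁻¹ * π = transloc i j := by
      apply Equiv.ext; intro k
      rcases eq_or_ne k j with rfl | hk
      · rw [hji, transloc_apply_self]
      · have : k ∈ Set.range j.succAbove := by rw [Fin.range_succAbove]; exact hk
        obtain ⟨p, rfl⟩ := this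
        rw [key p, transloc_succAbove]
    exact ⟨i, j, by rw [← hphi, mul_inv_cancel_left]⟩
  · rintro ⟨i, j, rfl⟩
    have hmem : m ∈ {k | ∃ f g : Fin k → Fin (m+1), StrictMono f ∧ StrictMono g ∧
        ∀ p, σ (f p) = (σ * transloc i j) (g p)} := by
      refine ⟨i.succAbove, j.succAbove, Fin.strictMono_succAbove i, Fin.strictMono_succAbove j,
        fun p => ?_⟩
      rw [Equiv.Perm.mul_apply, transloc_succAbove]
    have : m ≤ lcsLen (⇑σ) (⇑(σ * transloc i j)) := by
      rw [lcsLen]; exact le_csSup (lcs_bddAbove _ _) hmem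
    unfold ulamDist; omega


/-- Enumeration of the nontrivial translocations by `Fin m × Fin m`. -/
def tenum {m : ℕ} (ab : Fin m × Fin m) : Equiv.Perm (Fin (m + 1)) :=
  if (ab.1 : ℕ) ≤ ab.2 then transloc ab.1.castSucc ab.2.succ
  else transloc ab.1.succ ab.2.castSucc

theorem tenum_injective {m : ℕ} : Function.Injective (tenum (m := m)) := by
  rintro ⟨a, b⟩ ⟨a', b'⟩ h
  unfold tenum at h
  simp only at h
  split_ifs at h with h1 h2 h2
  · have e1 := transloc_eq_elim h b.succ
    simp only [Fin.coe_castSucc, Fin.val_succ] at e1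
    have : a.val = a'.val ∧ b.val = b'.val := by
      unfold tf at e1; split_ifs at e1 <;> omega
    exact Prod.ext (Fin.ext this.1) (Fin.ext this.2)
  · have e1 := transloc_eq_elim h a.castSucc
    simp only [Fin.coe_castSucc, Fin.val_succ] at e1
    have : False := by unfold tf at e1; split_ifs at e1 <;> omega
    exact this.elim
  · have e1 := transloc_eq_elim h a'.castSucc
    simp only [Fin.coe_castSucc, Fin.val_succ] at e1
    have : False := by unfold tf at e1; split_ifs at e1 <;> omega
    exact this.elim
  · have e1 := transloc_eq_elim h b.castSucc
    simp only [Fin.coe_castSucc, Fin.val_succ] at e1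
    have : a.val = a'.val ∧ b.val = b'.val := by
      unfold tf at e1; split_ifs at e1 <;> omega
    exact Prod.ext (Fin.ext this.1) (Fin.ext this.2)

theorem one_notMem_range_tenum {m : ℕ} :
    (1 : Equiv.Perm (Fin (m + 1))) ∉ Set.range (tenum (m := m)) := by
  rintro ⟨⟨a, b⟩, h⟩
  unfold tenum at h
  simp only at h
  split_ifs at h with h1
  · have e1 : (transloc a.castSucc b.succ b.succ).val = ((1 : Equiv.Perm (Fin (m+1))) b.succ).val :=
      congrArg Fin.val (DFunLike.congr_fun h b.succ)
    rw [transloc_apply] at e1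
    simp only [Equiv.Perm.coe_one, id_eq, Fin.coe_castSucc, Fin.val_succ] at e1
    unfold tf at e1; split_ifs at e1 <;> omega
  · have e1 : (transloc a.succ b.castSucc b.castSucc).val =
        ((1 : Equiv.Perm (Fin (m+1))) b.castSucc).val :=
      congrArg Fin.val (DFunLike.congr_fun h b.castSucc)
    rw [transloc_apply] at e1
    simp only [Equiv.Perm.coe_one, id_eq, Fin.coe_castSucc, Fin.val_succ] at e1
    unfold tf at e1; split_ifs at e1 <;> omega

theorem transloc_mem_insert {m : ℕ} (i j : Fin (m + 1)) :
    transloc i j ∈ insert (1 : Equiv.Perm (Fin (m+1))) (Set.range (tenum (m := m))) := by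
  rcases lt_trichotomy i.val j.val with hlt | heq | hgt
  · right
    have hi : i.val < m := by omega
    have hj : j.val - 1 < m := by omega
    refine ⟨(⟨i.val, hi⟩, ⟨j.val - 1, hj⟩), ?_⟩
    unfold tenum
    rw [if_pos (by simp; omega)]
    congr 1 <;> apply Fin.ext <;> simp <;> omega
  · left
    have : i = j := Fin.ext heq
    rw [this, transloc_self]
  · rcases eq_or_lt_of_le (Nat.succ_le_of_lt hgt) with hadj | hgt2
    · -- i.val = j.val + 1 : adjacent transposition
      right
      have hj : j.val < m := by omega
      refine ⟨(⟨j.val, hj⟩, ⟨j.val, hj⟩), ?_⟩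
      unfold tenum
      rw [if_pos (by simp)]
      rw [transloc_adj hadj.symm]
      congr 1 <;> apply Fin.ext <;> simp <;> omega
    · right
      have ha : i.val - 1 < m := by omega
      have hb : j.val < m := by omega
      refine ⟨(⟨i.val - 1, ha⟩, ⟨j.val, hb⟩), ?_⟩
      unfold tenum
      rw [if_neg (by simp; omega)]
      congr 1 <;> apply Fin.ext <;> simp <;> omega


/-- The Ulam sphere of radius 1 has cardinality `1 + (n−1)²`, independent of the center. -/
theorem ulamSphere_one_card {n : ℕ} (hn : 0 < n) (σ : Equiv.Perm (Fin n)) :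
    {π : Equiv.Perm (Fin n) | ulamDist σ π ≤ 1}.ncard = 1 + (n - 1) ^ 2 := by
  obtain ⟨m, rfl⟩ : ∃ m, n = m + 1 := ⟨n - 1, by omega⟩
  have hset : {π : Equiv.Perm (Fin (m+1)) | ulamDist σ π ≤ 1} =
      (fun φ => σ * φ) '' insert 1 (Set.range (tenum (m := m))) := by
    ext π
    simp only [Set.mem_setOf_eq, mem_sphere_iff, Set.mem_image]
    constructor
    · rintro ⟨i, j, rfl⟩
      exact ⟨transloc i j, transloc_mem_insert i j, rfl⟩
    · rintro ⟨φ, hφ, rfl⟩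
      rcases Set.mem_insert_iff.1 hφ with rfl | ⟨⟨a, b⟩, rfl⟩
      · exact ⟨0, 0, by rw [transloc_self, mul_one]⟩
      · unfold tenum
        split_ifs
        · exact ⟨_, _, rfl⟩
        · exact ⟨_, _, rfl⟩
  rw [hset, Set.ncard_image_of_injective _ (mul_right_injective σ),
    Set.ncard_insert_of_notMem one_notMem_range_tenum (Set.toFinite _)]
  have hcard : (Set.range (tenum (m := m))).ncard = m ^ 2 := by
    rw [← Nat.card_coe_set_eq, Nat.card_range_of_injective tenum_injective,
      Nat.card_eq_fintype_card]
    simp [pow_two]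
  rw [hcard]
  have h1 : m + 1 - 1 = m := rfl
  rw [h1, Nat.add_comm]


end UlamPaper
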